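/- arXiv:2309.07363 — 3 statements merged into one kernel-verified Lean document; each statement's English description precedes it below -/
import Mathlib

section
/- Let Θ and X be finite nonempty sets, let x : Θ → X be a deterministic map, let q ∈ Δ(Θ), and let K ≥ 1. Let x_* : Δ(Θ) → Δ(X) denote the pushforward x_*(p)(a) = Σ_{θ' : x(θ') = a} p(θ'). Then the set { (x_*(r^1),…,x_*(r^K)) : r^k ∈ Δ(Θ) for all k and (1/K)·Σ_k r^k = q } equals the set { (x̄^1,…,x̄^K) ∈ Δ(X)^K : (1/K)·Σ_k x̄^k = x_*(q) }. -/
open Finset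

/-- `p` is a probability vector on the finite set `Z`. -/
def IsProbVec {Z : Type*} [Fintype Z] (p : Z → ℝ) : Prop :=
  (∀ z, 0 ≤ p z) ∧ ∑ z, p z = 1

/-- Pushforward of `p ∈ Δ(Θ)` under the deterministic map `x : Θ → X`:
`x_*(p)(a) = Σ_{θ' : x θ' = a} p θ'`. -/
noncomputable def push {Θ X : Type*} [Fintype Θ] [DecidableEq X]
    (x : Θ → X) (p : Θ → ℝ) : X → ℝ :=
  fun a => ∑ θ' ∈ Finset.univ.filter (fun θ' => x θ' = a), p θ'

/-! A vector `w` over decisions is lifted to `Θ` by spreading the mass `w a` over the fibre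
`x⁻¹(a)` proportionally to `q`. This inverts `x_*` on vectors vanishing where `x_*(q)` does,
and it commutes with averaging, so averages equal to `x_*(q)` lift to averages equal to `q`. -/

section Push

variable {Θ X : Type*} [Fintype Θ] [DecidableEq X] (x : Θ → X)

lemma push_nonneg {p : Θ → ℝ} (hp : ∀ θ, 0 ≤ p θ) (a : X) : 0 ≤ push x p a :=
  sum_nonneg fun θ _ => hp θ

lemma le_push {p : Θ → ℝ} (hp : ∀ θ, 0 ≤ p θ) (θ : Θ) : p θ ≤ push x p (x θ) :=
  single_le_sum (fun θ' _ => hp θ') (by simp)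

lemma sum_push [Fintype X] (p : Θ → ℝ) : ∑ a, push x p a = ∑ θ, p θ :=
  sum_fiberwise _ _ _

lemma IsProbVec.push [Fintype X] {p : Θ → ℝ} (hp : IsProbVec p) : IsProbVec (push x p) :=
  ⟨push_nonneg x hp.1, (sum_push x p).trans hp.2⟩

lemma push_sum_div {ι : Type*} (s : Finset ι) (r : ι → Θ → ℝ) (c : ℝ) (a : X) :
    push x (fun θ => (∑ k ∈ s, r k θ) / c) a = (∑ k ∈ s, push x (r k) a) / c := by
  simp only [push, ← sum_div]
  rw [sum_comm]

/-- Where `push x q (x θ) = 0` the division returns `0`, so no case split is needed. -/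
noncomputable def fiberLift (q : Θ → ℝ) (w : X → ℝ) : Θ → ℝ :=
  fun θ => w (x θ) * q θ / push x q (x θ)

variable {x}

lemma push_fiberLift {q : Θ → ℝ} {w : X → ℝ} (hw : ∀ a, push x q a = 0 → w a = 0) :
    push x (fiberLift x q w) = w := by
  funext a
  have hfibre : push x (fiberLift x q w) a = w a * push x q a / push x q a := by
    simp only [push, fiberLift, mul_sum, sum_div]
    refine sum_congr rfl fun θ hθ => ?_
    rw [(mem_filter.1 hθ).2]
  rw [hfibre]
  by_cases ha : push x q a = 0
  · simp [ha, hw a ha]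
  · exact mul_div_cancel_right₀ _ ha

lemma fiberLift_push_self {q : Θ → ℝ} (hq : ∀ θ, 0 ≤ q θ) : fiberLift x q (push x q) = q := by
  funext θ
  by_cases hθ : push x q (x θ) = 0
  · have hq0 : q θ = 0 := le_antisymm (hθ ▸ le_push x hq θ) (hq θ)
    simp [fiberLift, hθ, hq0]
  · exact mul_div_cancel_left₀ _ hθ

lemma sum_fiberLift_div {ι : Type*} (s : Finset ι) (q : Θ → ℝ) (v : ι → X → ℝ) (c : ℝ)
    (θ : Θ) :
    (∑ k ∈ s, fiberLift x q (v k) θ) / c = fiberLift x q (fun a => (∑ k ∈ s, v k a) / c) θ := by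
  simp only [fiberLift, ← sum_div, ← sum_mul]
  ring

lemma IsProbVec.fiberLift [Fintype X] {q : Θ → ℝ} {w : X → ℝ} (hw : IsProbVec w)
    (hq : ∀ θ, 0 ≤ q θ) (hw0 : ∀ a, _root_.push x q a = 0 → w a = 0) :
    IsProbVec (fiberLift x q w) := by
  refine ⟨fun θ => div_nonneg (mul_nonneg (hw.1 _) (hq θ)) (push_nonneg x hq _), ?_⟩
  rw [← sum_push x, push_fiberLift hw0, hw.2]

end Push

theorem quota_decision_menu_eq_general {Θ X : Type*} [Fintype Θ] [Fintype X]
    [DecidableEq X]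
    (x : Θ → X) (q : Θ → ℝ) (hq : IsProbVec q) (K : ℕ) (hK : 1 ≤ K) :
    {v : Fin K → X → ℝ |
        ∃ r : Fin K → Θ → ℝ, (∀ k, IsProbVec (r k)) ∧
          (∀ θ', (∑ k, r k θ') / K = q θ') ∧ ∀ k, v k = push x (r k)} =
      {v : Fin K → X → ℝ |
        (∀ k, IsProbVec (v k)) ∧ ∀ a, (∑ k, v k a) / K = push x q a} := by
  ext v
  constructor
  · rintro ⟨r, hr, havg, hv⟩
    obtain rfl : v = fun k => push x (r k) := funext hv
    refine ⟨fun k => (hr k).push x, fun a => ?_⟩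
    rw [← push_sum_div, funext havg]
  · rintro ⟨hv, havg⟩
    have hK0 : (K : ℝ) ≠ 0 := by exact_mod_cast Nat.one_le_iff_ne_zero.1 hK
    have hv0 : ∀ k a, push x q a = 0 → v k a = 0 := fun k a ha => by
      have hsum : ∑ k, v k a = 0 := by simpa [hK0, ha] using havg a
      exact (sum_eq_zero_iff_of_nonneg fun k _ => (hv k).1 a).1 hsum k (mem_univ k)
    refine ⟨fun k => fiberLift x q (v k), fun k => (hv k).fiberLift hq.1 (hv0 k),
      fun θ => ?_, fun k => (push_fiberLift (hv0 k)).symm⟩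
    rw [sum_fiberLift_div, funext havg, fiberLift_push_self hq.1]

/-- Implementation via decision restrictions. For a
deterministic map `x`, the pushforwards of feasible report vectors at quota `q`
are exactly the vectors of lotteries over decisions averaging to `x_*(q)`. -/
theorem quota_decision_menu_eq {Θ X : Type*} [Fintype Θ] [Fintype X]
    [Nonempty Θ] [Nonempty X] [DecidableEq X]
    (x : Θ → X) (q : Θ → ℝ) (hq : IsProbVec q) (K : ℕ) (hK : 1 ≤ K) :
    {v : Fin K → X → ℝ |
        ∃ r : Fin K → Θ → ℝ, (∀ k, IsProbVec (r k)) ∧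
          (∀ θ', (∑ k, r k θ') / K = q θ') ∧ ∀ k, v k = push x (r k)} =
      {v : Fin K → X → ℝ |
        (∀ k, IsProbVec (v k)) ∧ ∀ a, (∑ k, v k a) / K = push x q a} :=
  quota_decision_menu_eq_general x q hq K hK
end

section
/- Let Θ and X be finite nonempty sets, u : X × Θ → ℝ, and let x : Θ → Δ(X) be a cyclically monotone social choice function. Let π ∈ Δ(Θ) and K ≥ 1. Then there exists a map σ : Θ^K → Δ(Θ)^K such that for every θ ∈ Θ^K, σ(θ) is a feasible report vector at quota π maximizing the payoff (1/K)·Σ_k ū(x(σ(θ)^k),θ^k) among all feasible report vectors at quota π, and the expected decision error under i.i.d. draws from π satisfies Σ_{θ∈Θ^K} (Π_k π(θ^k))·(1/K)·Σ_{k=1}^K ‖x(σ(θ)^k) − x(θ^k)‖ ≤ (1/(2√K))·(|Θ| − 1)^{3/2}. -/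
/-!
For a type profile with empirical distribution `m`, report vectors feasible at quota `π`
correspond to couplings `γ` of `m` and `π` (an agent of type `a` reports `γ a · / m a`), and the
payoff is the value `∑ a b, γ a b * ū(x b, a)` of the coupling. Among the optimal couplings take
one of maximal diagonal mass. Shifting mass from the edges of a cycle in its off-diagonal support
onto the diagonal keeps the marginals and, by cyclic monotonicity, does not lower the value, so
that off-diagonal part is an acyclic flow. Deleting the in-edges of a sink one at a time shows
that an acyclic flow on `n` vertices has mass at most `n - 1` times its total positive net
outflow, here `‖m - π‖`. The decision error of each agent is at most the mass it does not report
on its own type, so the average error is at most `(n - 1) ‖m - π‖`. Finally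
`E |m θ - π θ| ≤ √(π θ (1 - π θ) / K)` by the binomial variance, and Cauchy–Schwarz gives
`∑ θ, √(π θ (1 - π θ)) ≤ √(n - 1)`.
-/

open Finset

/-- Total variation distance `‖p − q‖ = (1/2)·Σ_z |p z − q z|`. -/
noncomputable def tv {Z : Type*} [Fintype Z] (p q : Z → ℝ) : ℝ :=
  (∑ z, |p z - q z|) / 2

/-- Lifted utility: `ū(μ,θ) = Σ_a μ(a)·u(a,θ)` for a lottery `μ ∈ Δ(X)`. -/
noncomputable def ubar {Θ X : Type*} [Fintype X]
    (u : X × Θ → ℝ) (μ : X → ℝ) (θ : Θ) : ℝ :=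
  ∑ a, μ a * u (a, θ)

/-- Linear extension of the social choice function `x : Θ → Δ(X)` to `Δ(Θ)`:
`x(r) = Σ_{θ'} r(θ')·x(θ')`. -/
noncomputable def liftSCF {Θ X : Type*} [Fintype Θ]
    (x : Θ → X → ℝ) (r : Θ → ℝ) : X → ℝ :=
  fun a => ∑ θ', r θ' * x θ' a

/-- `x : Θ → Δ(X)` is cyclically monotone for the utility `u`. -/
def CyclMonoSCF {Θ X : Type*} [Fintype X] (u : X × Θ → ℝ) (x : Θ → X → ℝ) : Prop :=
  ∀ J : ℕ, ∀ θs : Fin (J + 2) → Θ, Function.Injective θs →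
    ∑ j, ubar u (x (θs (j + 1))) (θs j) ≤ ∑ j, ubar u (x (θs j)) (θs j)

/-- `r = (r^1,…,r^K)` is a feasible report vector at quota `q`:
each `r^k ∈ Δ(Θ)` and `(1/K)·Σ_k r^k = q`. -/
def Feasible {Θ : Type*} [Fintype Θ] (K : ℕ) (q : Θ → ℝ)
    (r : Fin K → Θ → ℝ) : Prop :=
  (∀ k, IsProbVec (r k)) ∧ ∀ θ', (∑ k, r k θ') / K = q θ'

/-- Payoff of the report vector `r` at the type vector `θv`:
`(1/K)·Σ_k ū(x(r^k),θ^k)`. -/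
noncomputable def payoff {Θ X : Type*} [Fintype Θ] [Fintype X]
    (u : X × Θ → ℝ) (x : Θ → X → ℝ) (K : ℕ)
    (θv : Fin K → Θ) (r : Fin K → Θ → ℝ) : ℝ :=
  (∑ k, ubar u (liftSCF x (r k)) (θv k)) / K

/-- Empirical distribution of a type vector: `(marg θ)(θ') = |{k : θ^k = θ'}|/K`. -/
noncomputable def marg {Θ : Type*} [Fintype Θ] [DecidableEq Θ] (K : ℕ)
    (θv : Fin K → Θ) : Θ → ℝ :=
  fun θ' => ((Finset.univ.filter (fun k => θv k = θ')).card : ℝ) / K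

theorem IsCompact.exists_isMaxOn_and_le_of_le {β δ ε : Type*} [TopologicalSpace β]
    [LinearOrder δ] [TopologicalSpace δ] [ClosedIciTopology δ]
    [LinearOrder ε] [TopologicalSpace ε] [ClosedIciTopology ε]
    {s : Set β} (hs : IsCompact s) (hne : s.Nonempty) {f : β → δ} {g : β → ε}
    (hf : Continuous f) (hg : Continuous g) :
    ∃ z ∈ s, IsMaxOn f s z ∧ ∀ y ∈ s, f z ≤ f y → g y ≤ g z := by
  obtain ⟨z₀, hz₀s, hz₀⟩ := hs.exists_isMaxOn hne hf.continuousOn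
  have hA : IsCompact (s ∩ f ⁻¹' Set.Ici (f z₀)) := hs.inter_right (isClosed_Ici.preimage hf)
  obtain ⟨z, ⟨hzs, hz⟩, hzg⟩ := hA.exists_isMaxOn ⟨z₀, hz₀s, le_rfl⟩ hg.continuousOn
  exact ⟨z, hzs, fun y hy => (hz₀ hy).trans hz, fun y hy hzy => hzg ⟨hy, hz.trans hzy⟩⟩

theorem tv_comm {Z : Type*} [Fintype Z] (p q : Z → ℝ) : tv p q = tv q p := by
  simp only [tv, abs_sub_comm]

theorem tv_eq_sum_max_sub {Z : Type*} [Fintype Z] {p q : Z → ℝ} (h : ∑ z, p z = ∑ z, q z) :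
    tv p q = ∑ z, max (p z - q z) 0 := by
  have habs (z : Z) : |p z - q z| = 2 * max (p z - q z) 0 - (p z - q z) := by
    rcases le_total (p z - q z) 0 with hz | hz
    · rw [abs_of_nonpos hz, max_eq_right hz]; ring
    · rw [abs_of_nonneg hz, max_eq_left hz]; ring
  simp only [tv, habs, sum_sub_distrib, ← mul_sum, h, sub_self, sub_zero]
  ring

theorem IsProbVec.one_le_card {Z : Type*} [Fintype Z] {p : Z → ℝ} (hp : IsProbVec p) :
    1 ≤ (Fintype.card Z : ℝ) := by
  obtain ⟨z, -⟩ := exists_ne_zero_of_sum_ne_zero (hp.2 ▸ one_ne_zero : ∑ z, p z ≠ 0)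
  exact_mod_cast Fintype.card_pos_iff.mpr ⟨z⟩

section Acyclic

variable {α : Type*}

def IsAcyclic (f : α → α → ℝ) : Prop :=
  ∀ (J : ℕ) (c : Fin (J + 2) → α), Function.Injective c → ∃ j, f (c j) (c (j + 1)) ≤ 0

theorem IsAcyclic.mono {f g : α → α → ℝ} (hf : IsAcyclic f) (hgf : ∀ a b, g a b ≤ f a b) :
    IsAcyclic g := fun J c hc => (hf J c hc).imp fun _ hj => (hgf _ _).trans hj

theorem exists_injective_cycle_of_forall_rel_apply {β : Type*} [Finite β] {R : β → β → Prop}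
    (hR : ∀ x, ¬ R x x) (f : β → β) (hf : ∀ x, R x (f x)) (x : β) :
    ∃ (J : ℕ) (c : Fin (J + 2) → β), Function.Injective c ∧ ∀ j, R (c j) (c (j + 1)) := by
  obtain ⟨m, n, hmn, hfmn⟩ : ∃ m n, m < n ∧ f^[m] x = f^[n] x := by
    obtain ⟨m, n, hne, heq⟩ := Finite.exists_ne_map_eq_of_infinite (f^[·] x)
    rcases hne.lt_or_gt with h | h
    exacts [⟨m, n, h, heq⟩, ⟨n, m, h, heq.symm⟩]
  set y := f^[m] x
  have hy : y ∈ Function.periodicPts f :=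
    Function.mk_mem_periodicPts (Nat.sub_pos_of_lt hmn) <| by
      rw [Function.IsPeriodicPt, Function.IsFixedPt, ← Function.iterate_add_apply,
        Nat.sub_add_cancel hmn.le, hfmn]
  obtain ⟨J, hJ⟩ : ∃ J, Function.minimalPeriod f y = J + 2 := by
    have hpos := Function.minimalPeriod_pos_of_mem_periodicPts hy
    have hne : Function.minimalPeriod f y ≠ 1 := fun h =>
      hR y <| by simpa only [(Function.minimalPeriod_eq_one_iff_isFixedPt.mp h).eq] using hf y
    exact ⟨_, (Nat.sub_add_cancel (by omega : 2 ≤ Function.minimalPeriod f y)).symm⟩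
  refine ⟨J, fun j => f^[j] y, fun i j hij => ?_, fun j => ?_⟩
  · exact Fin.ext <| Function.iterate_injOn_Iio_minimalPeriod (by simp [hJ]) (by simp [hJ]) hij
  · have : (f^[((j + 1 : Fin (J + 2)) : ℕ)] y) = f (f^[j] y) := by
      have hmod := Function.iterate_mod_minimalPeriod_eq (f := f) (x := y) (n := j + 1)
      rw [hJ] at hmod
      rw [Fin.val_add, Fin.val_one', Nat.add_mod_mod, hmod, Function.iterate_succ_apply']
    simpa [this] using hf (f^[j] y)

theorem IsAcyclic.exists_sink [Finite α] {f : α → α → ℝ} (hf : IsAcyclic f)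
    (hdiag : ∀ a, f a a = 0) {a b : α} (hab : 0 < f a b) :
    ∃ v w, 0 < f w v ∧ ∀ b, f v b ≤ 0 := by
  -- Otherwise every vertex with an in-edge also has an out-edge; following them closes a cycle.
  by_contra! h
  have hnext : ∀ v : {v // ∃ w, 0 < f w v}, ∃ b : {v // ∃ w, 0 < f w v}, 0 < f v b :=
    fun ⟨v, w, hwv⟩ => let ⟨b, hb⟩ := h v w hwv; ⟨⟨b, v, hb⟩, hb⟩
  choose next hnext using hnext
  obtain ⟨J, c, hc, hcyc⟩ := exists_injective_cycle_of_forall_rel_apply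
    (R := fun v w : {v // ∃ w, 0 < f w v} => 0 < f v w) (fun v => by simp [hdiag]) next hnext
    ⟨b, a, hab⟩
  obtain ⟨j, hj⟩ := hf J (Subtype.val ∘ c) (Subtype.val_injective.comp hc)
  exact hj.not_gt (hcyc j)

variable [Fintype α]

def netOutflow (f : α → α → ℝ) (a : α) : ℝ :=
  ∑ b, f a b - ∑ b, f b a

theorem sum_netOutflow (f : α → α → ℝ) : ∑ a, netOutflow f a = 0 := by
  simp only [netOutflow]
  rw [sum_sub_distrib, sum_comm, sub_self]

theorem neg_netOutflow_le_sum_max (f : α → α → ℝ) (v : α) :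
    -netOutflow f v ≤ ∑ a, max (netOutflow f a) 0 := by
  have hmax : ∑ a, max (netOutflow f a) 0 = ∑ a, max (-netOutflow f a) 0 := by
    have := sum_congr rfl fun a (_ : a ∈ univ) =>
      max_zero_sub_max_neg_zero_eq_self (netOutflow f a)
    rw [sum_sub_distrib, sum_netOutflow] at this
    linarith
  rw [hmax]
  exact (le_max_left _ 0).trans <| single_le_sum (f := fun a => max (-netOutflow f a) 0)
    (fun a _ => le_max_right _ _) (mem_univ v)

theorem sum_max_netOutflow_cut_le [DecidableEq α] {f : α → α → ℝ} (hnn : ∀ a b, 0 ≤ f a b)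
    {v : α} (hv : ∀ b, f v b ≤ 0) :
    ∑ a, max (netOutflow (fun a b => if b = v then 0 else f a b) a) 0 ≤
      ∑ a, max (netOutflow f a) 0 := by
  refine sum_le_sum fun a _ => max_le ?_ (le_max_right _ _)
  have hrow : ∑ b, (if b = v then 0 else f a b) = ∑ b, f a b - f a v := by
    simp [sum_ite, filter_ne', sum_erase_eq_sub]
  by_cases ha : a = v
  · subst ha
    have : ∑ b, f a b - f a a ≤ 0 := by
      linarith [sum_nonpos (s := univ) fun b _ => hv b, hnn a a]
    simp [netOutflow, hrow, this]
  · simp only [netOutflow, hrow, if_neg ha]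
    linarith [hnn a v, le_max_left (∑ b, f a b - ∑ b, f b a) 0]

theorem IsAcyclic.sum_sum_le_card_sub_one_mul [DecidableEq α] (S : Finset α)
    {f : α → α → ℝ} (hf : IsAcyclic f) (hnn : ∀ a b, 0 ≤ f a b) (hdiag : ∀ a, f a a = 0)
    (hS : ∀ a b, 0 < f a b → a ∈ S ∧ b ∈ S) :
    ∑ a, ∑ b, f a b ≤ (#S - 1 : ℝ) * ∑ a, max (netOutflow f a) 0 := by
  induction S using strongInduction generalizing f with
  | _ S ih =>
  by_cases hzero : ∀ a b, f a b = 0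
  · simp [hzero, netOutflow]
  push Not at hzero
  obtain ⟨a, b, hab⟩ := hzero
  obtain ⟨v, w, hwv, hv⟩ := hf.exists_sink hdiag ((hnn a b).lt_of_ne' hab)
  have hvS := (hS w v hwv).2
  have hcard : (2 : ℝ) ≤ #S := by
    exact_mod_cast one_lt_card.mpr
      ⟨v, hvS, w, (hS w v hwv).1, fun h => by simp [h, hdiag] at hwv⟩
  set f' : α → α → ℝ := fun a b => if b = v then 0 else f a b
  have hsplit : ∑ a, ∑ b, f a b = ∑ a, ∑ b, f' a b + -netOutflow f v := by
    have hout : ∑ b, f v b = 0 := sum_eq_zero fun b _ => (hv b).antisymm (hnn v b)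
    simp [f', netOutflow, hout, sum_ite, filter_ne', sum_erase_eq_sub]
  have hrec := ih (S.erase v) (erase_ssubset hvS) (f := f')
    (hf.mono fun a b => by simp only [f']; split_ifs <;> simp [hnn])
    (fun a b => by simp only [f']; split_ifs <;> simp [hnn])
    (fun a => by simp only [f']; split_ifs <;> simp [hdiag])
    (fun a b hab => by
      have hbv : b ≠ v := fun h => by simp [f', h] at hab
      have hab' : 0 < f a b := by simpa [f', hbv] using hab
      have hav : a ≠ v := fun h => (hv b).not_gt (h ▸ hab')
      exact ⟨mem_erase.mpr ⟨hav, (hS a b hab').1⟩,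
        mem_erase.mpr ⟨hbv, (hS a b hab').2⟩⟩)
  rw [card_erase_of_mem hvS, Nat.cast_sub (by exact_mod_cast hcard.trans' one_le_two),
    Nat.cast_one] at hrec
  rw [hsplit]
  nlinarith [mul_le_mul_of_nonneg_left (sum_max_netOutflow_cut_le hnn hv)
    (by linarith : (0 : ℝ) ≤ #S - 1 - 1), neg_netOutflow_le_sum_max f v]

end Acyclic

section Coupling

variable {α : Type*} [Fintype α]

structure IsCoupling (m π : α → ℝ) (γ : α → α → ℝ) : Prop where
  nonneg : ∀ a b, 0 ≤ γ a b
  sum_row : ∀ a, ∑ b, γ a b = m a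
  sum_col : ∀ b, ∑ a, γ a b = π b

theorem IsProbVec.isCoupling_mul {m π : α → ℝ} (hm : IsProbVec m) (hπ : IsProbVec π) :
    IsCoupling m π fun a b => m a * π b where
  nonneg a b := mul_nonneg (hm.1 a) (hπ.1 b)
  sum_row a := by rw [← mul_sum, hπ.2, mul_one]
  sum_col b := by rw [← sum_mul, hm.2, one_mul]

theorem isCompact_setOf_isCoupling (m π : α → ℝ) :
    IsCompact {γ : α → α → ℝ | IsCoupling m π γ} := by
  have hclosed : IsClosed {γ : α → α → ℝ | IsCoupling m π γ} := by
    have : {γ : α → α → ℝ | IsCoupling m π γ} = (⋂ a, ⋂ b, {γ | 0 ≤ γ a b}) ∩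
        (⋂ a, {γ | ∑ b, γ a b = m a}) ∩ ⋂ b, {γ | ∑ a, γ a b = π b} := by
      ext γ
      simp only [Set.mem_ofPred_eq, Set.mem_inter_iff, Set.mem_iInter]
      exact ⟨fun h => ⟨⟨h.1, h.2⟩, h.3⟩, fun ⟨⟨h₁, h₂⟩, h₃⟩ => ⟨h₁, h₂, h₃⟩⟩
    rw [this]
    refine .inter (.inter ?_ ?_) ?_ <;> refine isClosed_iInter fun _ => ?_
    · exact isClosed_iInter fun _ => isClosed_le continuous_const (by fun_prop)
    · exact isClosed_eq (by fun_prop) continuous_const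
    · exact isClosed_eq (by fun_prop) continuous_const
  refine (isCompact_univ_pi fun a => isCompact_univ_pi fun _ => isCompact_Icc (a := 0) (b := m a))
    |>.of_isClosed_subset hclosed fun γ hγ a _ b _ => ⟨hγ.nonneg a b, ?_⟩
  rw [← hγ.sum_row a]
  exact single_le_sum (fun b _ => hγ.nonneg a b) (mem_univ b)

def couplingValue (w γ : α → α → ℝ) : ℝ :=
  ∑ a, ∑ b, γ a b * w a b

theorem couplingValue_add_smul (w γ δ : α → α → ℝ) (ε : ℝ) :
    couplingValue w (γ + ε • δ) = couplingValue w γ + ε * couplingValue w δ := by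
  simp only [couplingValue, Pi.add_apply, Pi.smul_apply, smul_eq_mul, add_mul,
    sum_add_distrib, mul_sum, mul_assoc]

variable [DecidableEq α]

def cycleShift {J : ℕ} (c : Fin (J + 2) → α) (a b : α) : ℝ :=
  ∑ j, if a = c j then (if b = c j then 1 else 0) - (if b = c (j + 1) then 1 else 0) else 0

theorem couplingValue_cycleShift (w : α → α → ℝ) {J : ℕ} (c : Fin (J + 2) → α) :
    couplingValue w (cycleShift c) = ∑ j, (w (c j) (c j) - w (c j) (c (j + 1))) := by
  simp [couplingValue, cycleShift, sum_mul, sum_comm (γ := α), ite_mul, sub_mul]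

theorem sum_cycleShift_row {J : ℕ} (c : Fin (J + 2) → α) (a : α) : ∑ b, cycleShift c a b = 0 := by
  simp [cycleShift, sum_comm (γ := α)]

theorem sum_cycleShift_col {J : ℕ} (c : Fin (J + 2) → α) (b : α) : ∑ a, cycleShift c a b = 0 := by
  simp only [cycleShift]
  rw [sum_comm]
  simp only [sum_ite_eq', mem_univ, if_true]
  rw [sum_sub_distrib, sub_eq_zero]
  exact (Equiv.sum_comp (Equiv.addRight (1 : Fin (J + 2)))
    fun j => if b = c j then (1 : ℝ) else 0).symm

omit [Fintype α] in
theorem cycleShift_apply_self {J : ℕ} {c : Fin (J + 2) → α} (hc : Function.Injective c)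
    (i : Fin (J + 2)) (b : α) :
    cycleShift c (c i) b = (if b = c i then 1 else 0) - (if b = c (i + 1) then 1 else 0) := by
  simp [cycleShift, hc.eq_iff]

theorem IsCoupling.add_smul_cycleShift {m π : α → ℝ} {γ : α → α → ℝ} (hγ : IsCoupling m π γ)
    {J : ℕ} {c : Fin (J + 2) → α} (hc : Function.Injective c) {ε : ℝ} (hε : 0 ≤ ε)
    (hεγ : ∀ j, ε ≤ γ (c j) (c (j + 1))) : IsCoupling m π (γ + ε • cycleShift c) where
  nonneg a b := by
    simp only [Pi.add_apply, Pi.smul_apply, smul_eq_mul]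
    by_cases ha : a ∈ Set.range c
    · obtain ⟨i, rfl⟩ := ha
      rw [cycleShift_apply_self hc]
      have hne : c i ≠ c (i + 1) := hc.ne (by simp)
      split_ifs with h₁ h₂ h₂
      · exact absurd (h₁.symm.trans h₂) hne
      · nlinarith [hγ.nonneg (c i) b]
      · subst h₂; linarith [hεγ i]
      · simp [hγ.nonneg]
    · have : cycleShift c a b = 0 :=
        sum_eq_zero fun j _ => if_neg fun h => ha ⟨j, h.symm⟩
      simp [this, hγ.nonneg]
  sum_row a := by
    simp [sum_add_distrib, ← mul_sum, sum_cycleShift_row, hγ.sum_row]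
  sum_col b := by
    simp [sum_add_distrib, ← mul_sum, sum_cycleShift_col, hγ.sum_col]

theorem IsCoupling.isAcyclic_offDiag {m π : α → ℝ} {γ w : α → α → ℝ}
    (hw : ∀ (J : ℕ) (c : Fin (J + 2) → α), Function.Injective c →
      ∑ j, w (c j) (c (j + 1)) ≤ ∑ j, w (c j) (c j))
    (hγ : IsCoupling m π γ)
    (hmax : ∀ γ', IsCoupling m π γ' → couplingValue w γ ≤ couplingValue w γ' →
      ∑ a, γ' a a ≤ ∑ a, γ a a) :
    IsAcyclic fun a b => if a = b then 0 else γ a b := by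
  intro J c hc
  by_contra! hpos
  have hne (j : Fin (J + 2)) : c j ≠ c (j + 1) := hc.ne (by simp)
  simp only [hne, if_false] at hpos
  obtain ⟨j₀, hj₀⟩ := Finite.exists_min fun j => γ (c j) (c (j + 1))
  set ε := γ (c j₀) (c (j₀ + 1))
  have hε : 0 < ε := hpos j₀
  have hvalue : couplingValue w γ ≤ couplingValue w (γ + ε • cycleShift c) := by
    rw [couplingValue_add_smul, couplingValue_cycleShift, sum_sub_distrib]
    nlinarith [hw J c hc]
  have htrace : ∑ a, (γ + ε • cycleShift c) a a = ∑ a, γ a a + ε * (J + 2) := by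
    have := couplingValue_cycleShift (fun a b => if a = b then 1 else 0) c
    simp [couplingValue, hne] at this
    simp [sum_add_distrib, ← mul_sum, this]
  have := hmax _ (hγ.add_smul_cycleShift hc hε.le hj₀) hvalue
  rw [htrace] at this
  nlinarith

theorem exists_optimal_coupling_one_sub_trace_le {m π : α → ℝ} {w : α → α → ℝ}
    (hw : ∀ (J : ℕ) (c : Fin (J + 2) → α), Function.Injective c →
      ∑ j, w (c j) (c (j + 1)) ≤ ∑ j, w (c j) (c j))
    (hm : IsProbVec m) (hπ : IsProbVec π) :
    ∃ γ, IsCoupling m π γ ∧ (∀ γ', IsCoupling m π γ' → couplingValue w γ' ≤ couplingValue w γ) ∧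
      1 - ∑ a, γ a a ≤ (Fintype.card α - 1 : ℝ) * tv m π := by
  obtain ⟨γ, hγ, hmaxL, hmaxT⟩ := (isCompact_setOf_isCoupling m π).exists_isMaxOn_and_le_of_le
    ⟨_, hm.isCoupling_mul hπ⟩ (f := couplingValue w) (g := fun γ => ∑ a, γ a a)
    (by unfold couplingValue; fun_prop) (by fun_prop)
  refine ⟨γ, hγ, fun γ' h => hmaxL h, ?_⟩
  have hrow (a : α) : ∑ b, (if a = b then 0 else γ a b) = m a - γ a a := by
    simp [sum_ite, filter_ne, sum_erase_eq_sub, hγ.sum_row]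
  have hcol (b : α) : ∑ a, (if a = b then 0 else γ a b) = π b - γ b b := by
    simp [sum_ite, filter_ne', sum_erase_eq_sub, hγ.sum_col]
  have := (hγ.isAcyclic_offDiag hw hmaxT).sum_sum_le_card_sub_one_mul univ
    (fun a b => by split_ifs <;> simp [hγ.nonneg]) (by simp) (by simp)
  simp only [netOutflow, hrow, hcol, card_univ, sub_sub_sub_cancel_right,
    sum_sub_distrib, hm.2] at this
  rwa [tv_eq_sum_max_sub (hm.2.trans hπ.2.symm)]

end Coupling

section Reports

variable {Θ X : Type*} [Fintype Θ] [Fintype X]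

theorem ubar_liftSCF (u : X × Θ → ℝ) (x : Θ → X → ℝ) (ρ : Θ → ℝ) (θ : Θ) :
    ubar u (liftSCF x ρ) θ = ∑ θ', ρ θ' * ubar u (x θ') θ := by
  simp only [ubar, liftSCF, sum_mul, mul_sum, mul_assoc]
  exact sum_comm

theorem tv_liftSCF_le {x : Θ → X → ℝ} (hx : ∀ θ, IsProbVec (x θ)) {ρ : Θ → ℝ}
    (hρ : IsProbVec ρ) (θ : Θ) : tv (liftSCF x ρ) (x θ) ≤ 1 - ρ θ := by
  have hsum : ∑ a, x θ a = ∑ a, liftSCF x ρ a := by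
    simp only [liftSCF]
    rw [sum_comm]
    simp [← mul_sum, (hx _).2, hρ.2]
  have hρθ : ρ θ ≤ 1 :=
    hρ.2 ▸ single_le_sum (fun θ' _ => hρ.1 θ') (mem_univ θ)
  rw [tv_comm, tv_eq_sum_max_sub hsum]
  calc ∑ a, max (x θ a - liftSCF x ρ a) 0 ≤ ∑ a, (1 - ρ θ) * x θ a := by
        refine sum_le_sum fun a _ => max_le ?_ (mul_nonneg (by linarith) ((hx θ).1 a))
        have : ρ θ * x θ a ≤ liftSCF x ρ a := single_le_sum
          (f := fun θ' => ρ θ' * x θ' a) (fun θ' _ => mul_nonneg (hρ.1 θ') ((hx θ').1 a))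
          (mem_univ θ)
        linarith
    _ = 1 - ρ θ := by rw [← mul_sum, (hx θ).2, mul_one]

variable [DecidableEq Θ] {K : ℕ}

theorem isProbVec_marg (hK : K ≠ 0) (θv : Fin K → Θ) : IsProbVec (marg K θv) := by
  refine ⟨fun θ => by unfold marg; positivity, ?_⟩
  simp only [marg, ← sum_div]
  rw [← Nat.cast_sum, ← card_eq_sum_card_fiberwise fun k _ => mem_univ (θv k),
    card_univ, Fintype.card_fin]
  exact div_self (Nat.cast_ne_zero.mpr hK)

theorem marg_apply_pos (θv : Fin K → Θ) (k : Fin K) : 0 < marg K θv (θv k) := by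
  have : 0 < #(univ.filter fun k' => θv k' = θv k) :=
    card_pos.mpr ⟨k, by simp⟩
  have : 0 < K := k.pos
  unfold marg
  positivity

noncomputable def reportCoupling (θv : Fin K → Θ) (r : Fin K → Θ → ℝ) (a b : Θ) : ℝ :=
  (∑ k, if θv k = a then r k b else 0) / K

noncomputable def reportsOfCoupling (θv : Fin K → Θ) (γ : Θ → Θ → ℝ) (k : Fin K) (b : Θ) : ℝ :=
  γ (θv k) b / marg K θv (θv k)

theorem sum_reportCoupling_col (θv : Fin K → Θ) (r : Fin K → Θ → ℝ) (b : Θ) :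
    ∑ a, reportCoupling θv r a b = (∑ k, r k b) / K := by
  simp only [reportCoupling, ← sum_div]
  rw [sum_comm]
  simp

theorem sum_reportCoupling_diag (θv : Fin K → Θ) (r : Fin K → Θ → ℝ) :
    ∑ a, reportCoupling θv r a a = (∑ k, r k (θv k)) / K := by
  simp only [reportCoupling, ← sum_div]
  rw [sum_comm]
  simp

theorem sum_reportCoupling_row (θv : Fin K → Θ) {r : Fin K → Θ → ℝ}
    (hr : ∀ k, IsProbVec (r k)) (a : Θ) : ∑ b, reportCoupling θv r a b = marg K θv a := by
  simp only [reportCoupling, marg, ← sum_div]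
  rw [sum_comm]
  simp [(hr _).2]

theorem Feasible.isCoupling_reportCoupling {π : Θ → ℝ} {r : Fin K → Θ → ℝ}
    (hr : Feasible K π r) (θv : Fin K → Θ) : IsCoupling (marg K θv) π (reportCoupling θv r) where
  nonneg a b := by
    unfold reportCoupling
    exact div_nonneg (sum_nonneg fun k _ => by split_ifs <;> simp [(hr.1 k).1]) K.cast_nonneg
  sum_row := sum_reportCoupling_row θv hr.1
  sum_col b := by rw [sum_reportCoupling_col, hr.2]

theorem payoff_eq_couplingValue_reportCoupling (u : X × Θ → ℝ) (x : Θ → X → ℝ)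
    (θv : Fin K → Θ) (r : Fin K → Θ → ℝ) :
    payoff u x K θv r = couplingValue (fun a b => ubar u (x b) a) (reportCoupling θv r) := by
  simp only [payoff, couplingValue, reportCoupling, ubar_liftSCF, div_mul_eq_mul_div,
    ← sum_div, sum_mul]
  congr 1
  rw [sum_comm_cycle]
  refine sum_congr rfl fun k _ => ?_
  rw [sum_comm]
  simp [ite_mul]

theorem IsCoupling.reportCoupling_reportsOfCoupling {π : Θ → ℝ} {γ : Θ → Θ → ℝ}
    {θv : Fin K → Θ} (hγ : IsCoupling (marg K θv) π γ) :
    reportCoupling θv (reportsOfCoupling θv γ) = γ := by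
  funext a b
  have hterm (k : Fin K) : (if θv k = a then reportsOfCoupling θv γ k b else 0) =
      if θv k = a then γ a b / marg K θv a else 0 := by
    split_ifs with h
    · rw [reportsOfCoupling, h]
    · rfl
  simp only [reportCoupling, hterm, sum_ite, sum_const_zero, add_zero,
    sum_const, nsmul_eq_mul]
  by_cases hcard : #(univ.filter fun k => θv k = a) = 0
  · have hmarg : marg K θv a = 0 := by simp [marg, hcard]
    have : γ a b = 0 := (sum_eq_zero_iff_of_nonneg fun b _ => hγ.nonneg a b).mp
      (by rw [hγ.sum_row, hmarg]) b (mem_univ b)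
    simp [this]
  · obtain ⟨k, -⟩ := card_ne_zero.mp hcard
    have : (K : ℝ) ≠ 0 := Nat.cast_ne_zero.mpr k.pos.ne'
    have : (#(univ.filter fun k => θv k = a) : ℝ) ≠ 0 := Nat.cast_ne_zero.mpr hcard
    simp only [marg]
    field_simp

theorem IsCoupling.feasible_reportsOfCoupling {π : Θ → ℝ} {γ : Θ → Θ → ℝ}
    {θv : Fin K → Θ} (hγ : IsCoupling (marg K θv) π γ) :
    Feasible K π (reportsOfCoupling θv γ) := by
  refine ⟨fun k => ⟨fun b => div_nonneg (hγ.nonneg _ b) (marg_apply_pos θv k).le, ?_⟩, fun b => ?_⟩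
  · simp only [reportsOfCoupling, ← sum_div, hγ.sum_row]
    exact div_self (marg_apply_pos θv k).ne'
  · rw [← sum_reportCoupling_col θv, hγ.reportCoupling_reportsOfCoupling, hγ.sum_col]

theorem exists_optimal_reports_error_le {u : X × Θ → ℝ} {x : Θ → X → ℝ}
    (hx : ∀ θ, IsProbVec (x θ)) (hcm : CyclMonoSCF u x) {π : Θ → ℝ} (hπ : IsProbVec π)
    (hK : K ≠ 0) (θv : Fin K → Θ) :
    ∃ r, Feasible K π r ∧ (∀ r', Feasible K π r' → payoff u x K θv r' ≤ payoff u x K θv r) ∧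
      (∑ k, tv (liftSCF x (r k)) (x (θv k))) / K ≤
        (Fintype.card Θ - 1 : ℝ) * tv (marg K θv) π := by
  obtain ⟨γ, hγ, hmax, htrace⟩ := exists_optimal_coupling_one_sub_trace_le
    (w := fun a b => ubar u (x b) a) hcm (isProbVec_marg hK θv) hπ
  have hr := hγ.feasible_reportsOfCoupling
  refine ⟨_, hr, fun r' hr' => ?_, ?_⟩
  · rw [payoff_eq_couplingValue_reportCoupling, payoff_eq_couplingValue_reportCoupling,
      hγ.reportCoupling_reportsOfCoupling]
    exact hmax _ (hr'.isCoupling_reportCoupling θv)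
  calc (∑ k, tv (liftSCF x (reportsOfCoupling θv γ k)) (x (θv k))) / K
      ≤ (∑ k, (1 - reportsOfCoupling θv γ k (θv k))) / K := by
        gcongr with k
        exact tv_liftSCF_le hx (hr.1 k) (θv k)
    _ = 1 - ∑ a, γ a a := by
        have hdiag := sum_reportCoupling_diag θv (reportsOfCoupling θv γ)
        rw [hγ.reportCoupling_reportsOfCoupling] at hdiag
        rw [hdiag, sum_sub_distrib, sum_const, card_univ, Fintype.card_fin,
          nsmul_one, sub_div, div_self (Nat.cast_ne_zero.mpr hK)]
    _ ≤ _ := htrace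

end Reports

section Sampling

variable {Θ : Type*} [Fintype Θ] {K : ℕ}

theorem sum_prod_mul_apply {π : Θ → ℝ} (hπ : ∑ θ, π θ = 1) (k : Fin K) (g : Θ → ℝ) :
    ∑ θv : Fin K → Θ, (∏ i, π (θv i)) * g (θv k) = ∑ θ, π θ * g θ := by
  calc ∑ θv : Fin K → Θ, (∏ i, π (θv i)) * g (θv k)
      = ∑ θv : Fin K → Θ, ∏ i, π (θv i) * (if i = k then g (θv i) else 1) := by
        simp only [prod_mul_distrib, prod_ite_eq', mem_univ, if_true]
    _ = ∏ i, ∑ θ, π θ * (if i = k then g θ else 1) :=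
        (Fintype.prod_sum fun i θ => π θ * (if i = k then g θ else 1)).symm
    _ = ∑ θ, π θ * g θ := by simp [mul_ite, sum_ite_irrel, hπ]

theorem sum_prod_mul_apply_mul_apply {π : Θ → ℝ} (hπ : ∑ θ, π θ = 1) {k l : Fin K}
    (hkl : k ≠ l) (g h : Θ → ℝ) :
    ∑ θv : Fin K → Θ, (∏ i, π (θv i)) * (g (θv k) * h (θv l)) =
      (∑ θ, π θ * g θ) * ∑ θ, π θ * h θ := by
  calc ∑ θv : Fin K → Θ, (∏ i, π (θv i)) * (g (θv k) * h (θv l))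
      = ∑ θv : Fin K → Θ, ∏ i, π (θv i) *
          ((if i = k then g (θv i) else 1) * (if i = l then h (θv i) else 1)) := by
        simp only [prod_mul_distrib, prod_ite_eq', mem_univ, if_true]
    _ = ∏ i, ∑ θ, π θ * ((if i = k then g θ else 1) * (if i = l then h θ else 1)) :=
        (Fintype.prod_sum fun i θ => π θ * ((if i = k then g θ else 1) *
          (if i = l then h θ else 1))).symm
    _ = (∑ θ, π θ * g θ) * ∑ θ, π θ * h θ := by
        simp only [mul_ite, mul_one, ite_mul, one_mul, sum_ite_irrel, hπ]
        rw [prod_eq_mul k l hkl (fun i _ hi => by simp [hi.1, hi.2]) (by simp) (by simp)]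
        simp [hkl, hkl.symm]

theorem sum_prod_mul_sum_apply_sq {π : Θ → ℝ} (hπ : ∑ θ, π θ = 1) {Y : Θ → ℝ}
    (hY : ∑ t, π t * Y t = 0) :
    ∑ θv : Fin K → Θ, (∏ i, π (θv i)) * (∑ k, Y (θv k)) ^ 2 = K * ∑ t, π t * Y t ^ 2 := by
  have hcross (k l : Fin K) : ∑ θv : Fin K → Θ, (∏ i, π (θv i)) * (Y (θv k) * Y (θv l)) =
      if k = l then ∑ t, π t * Y t ^ 2 else 0 := by
    split_ifs with h
    · subst h
      simp_rw [← sq]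
      exact sum_prod_mul_apply hπ k fun t => Y t ^ 2
    · rw [sum_prod_mul_apply_mul_apply hπ h, hY, zero_mul]
  have hexpand (θv : Fin K → Θ) : (∏ i, π (θv i)) * (∑ k, Y (θv k)) ^ 2 =
      ∑ k, ∑ l, (∏ i, π (θv i)) * (Y (θv k) * Y (θv l)) := by
    rw [sq, sum_mul_sum, mul_sum]
    simp_rw [mul_sum]
  rw [sum_congr rfl fun θv _ => hexpand θv, sum_comm_cycle, sum_comm_cycle]
  simp [hcross]

theorem sum_sqrt_mul_one_sub_le {π : Θ → ℝ} (hπ : IsProbVec π) :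
    ∑ θ, √(π θ * (1 - π θ)) ≤ √(Fintype.card Θ - 1) := by
  have hle (θ : Θ) : π θ ≤ 1 :=
    hπ.2 ▸ single_le_sum (fun θ' _ => hπ.1 θ') (mem_univ θ)
  refine (le_abs_self _).trans (Real.abs_le_sqrt ?_)
  have hcs := sq_sum_le_card_mul_sum_sq (s := univ) (f := fun θ => √(π θ * (1 - π θ)))
  have hcs' := sq_sum_le_card_mul_sum_sq (s := univ) (f := π)
  simp only [card_univ, hπ.2] at hcs hcs'
  rw [sum_congr rfl fun θ _ => Real.sq_sqrt (mul_nonneg (hπ.1 θ) (sub_nonneg.2 (hle θ)))]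
    at hcs
  have : ∑ θ, π θ * (1 - π θ) = 1 - ∑ θ, π θ ^ 2 := by
    simp [mul_sub, sum_sub_distrib, hπ.2, sq]
  rw [this] at hcs
  nlinarith

variable [DecidableEq Θ]

theorem sum_prod_mul_marg_sub_sq {π : Θ → ℝ} (hπ : IsProbVec π) (hK : K ≠ 0) (θ : Θ) :
    ∑ θv : Fin K → Θ, (∏ i, π (θv i)) * (marg K θv θ - π θ) ^ 2 = π θ * (1 - π θ) / K := by
  set Y : Θ → ℝ := fun t => (if t = θ then 1 else 0) - π θ
  have hmean : ∑ t, π t * Y t = 0 := by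
    simp [Y, mul_sub, sum_sub_distrib, ← sum_mul, hπ.2]
  have hvar : ∑ t, π t * Y t ^ 2 = π θ * (1 - π θ) := by
    have (t : Θ) : π t * Y t ^ 2 =
        (1 - 2 * π θ) * (if t = θ then π t else 0) + π θ ^ 2 * π t := by
      by_cases h : t = θ <;> simp [Y, h] <;> ring
    simp only [this, sum_add_distrib, ← mul_sum, sum_ite_eq',
      mem_univ, if_true, hπ.2]
    ring
  have hK' : (K : ℝ) ≠ 0 := Nat.cast_ne_zero.mpr hK
  have hmarg (θv : Fin K → Θ) : marg K θv θ - π θ = (∑ k, Y (θv k)) / K := by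
    simp only [marg, Y, sum_sub_distrib, sum_boole, sum_const,
      card_univ, Fintype.card_fin, nsmul_eq_mul]
    field_simp
  simp only [hmarg, div_pow, mul_div_assoc', ← sum_div,
    sum_prod_mul_sum_apply_sq hπ.2 hmean, hvar]
  field_simp

theorem sum_prod_mul_abs_marg_sub_le {π : Θ → ℝ} (hπ : IsProbVec π) (hK : K ≠ 0) (θ : Θ) :
    ∑ θv : Fin K → Θ, (∏ i, π (θv i)) * |marg K θv θ - π θ| ≤ √(π θ * (1 - π θ) / K) := by
  have hw (θv : Fin K → Θ) : 0 ≤ ∏ i, π (θv i) := prod_nonneg fun i _ => hπ.1 _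
  have hw₁ : ∑ θv : Fin K → Θ, ∏ i, π (θv i) = 1 := by
    rw [← Fintype.prod_sum fun _ => π]
    simp [hπ.2]
  refine (le_abs_self _).trans (Real.abs_le_sqrt ?_)
  have := sum_sq_le_sum_mul_sum_of_sq_le_mul univ (fun θv _ => hw θv)
    (fun θv _ => mul_nonneg (hw θv) (sq_nonneg (marg K θv θ - π θ)))
    (fun θv _ => (by rw [mul_pow, sq_abs]; ring : ((∏ i, π (θv i)) * |marg K θv θ - π θ|) ^ 2 =
      (∏ i, π (θv i)) * ((∏ i, π (θv i)) * (marg K θv θ - π θ) ^ 2)).le)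
  rwa [hw₁, one_mul, sum_prod_mul_marg_sub_sq hπ hK θ] at this

theorem sum_prod_mul_tv_marg_le {π : Θ → ℝ} (hπ : IsProbVec π) (hK : K ≠ 0) :
    ∑ θv : Fin K → Θ, (∏ i, π (θv i)) * tv (marg K θv) π ≤
      √(Fintype.card Θ - 1) / (2 * √K) := by
  calc ∑ θv : Fin K → Θ, (∏ i, π (θv i)) * tv (marg K θv) π
      = (∑ θ, ∑ θv : Fin K → Θ, (∏ i, π (θv i)) * |marg K θv θ - π θ|) / 2 := by
        simp only [tv, mul_div_assoc', mul_sum, ← sum_div]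
        rw [sum_comm]
    _ ≤ (∑ θ, √(π θ * (1 - π θ) / K)) / 2 := by
        gcongr with θ
        exact sum_prod_mul_abs_marg_sub_le hπ hK θ
    _ = (∑ θ, √(π θ * (1 - π θ))) / (2 * √K) := by
        simp only [Real.sqrt_div' _ K.cast_nonneg, ← sum_div]
        ring
    _ ≤ √(Fintype.card Θ - 1) / (2 * √K) := by
        gcongr
        exact sum_sqrt_mul_one_sub_le hπ

end Sampling

theorem quota_expected_error_bound_general {Θ X : Type*} [Fintype Θ] [Fintype X]
    (u : X × Θ → ℝ) (x : Θ → X → ℝ) (hx : ∀ θ, IsProbVec (x θ))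
    (hcm : CyclMonoSCF u x)
    (π : Θ → ℝ) (hπ : IsProbVec π) (K : ℕ) (hK : 1 ≤ K) :
    ∃ σ : (Fin K → Θ) → (Fin K → Θ → ℝ),
      (∀ θv : Fin K → Θ, Feasible K π (σ θv) ∧
        ∀ r' : Fin K → Θ → ℝ, Feasible K π r' →
          payoff u x K θv r' ≤ payoff u x K θv (σ θv)) ∧
      ∑ θv : Fin K → Θ, (∏ k, π (θv k)) *
          ((∑ k, tv (liftSCF x (σ θv k)) (x (θv k))) / K) ≤
        (1 / (2 * Real.sqrt K)) * ((Fintype.card Θ : ℝ) - 1) ^ ((3 : ℝ) / 2) := by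
  classical
  have hK₀ : K ≠ 0 := by omega
  choose σ hfeas hbest herr using exists_optimal_reports_error_le hx hcm hπ hK₀
  refine ⟨σ, fun θv => ⟨hfeas θv, hbest θv⟩, ?_⟩
  have hn : (0 : ℝ) ≤ Fintype.card Θ - 1 := sub_nonneg.2 hπ.one_le_card
  calc ∑ θv : Fin K → Θ, (∏ k, π (θv k)) * ((∑ k, tv (liftSCF x (σ θv k)) (x (θv k))) / K)
      ≤ ∑ θv : Fin K → Θ, (∏ k, π (θv k)) * ((Fintype.card Θ - 1) * tv (marg K θv) π) := by
        gcongr with θv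
        · exact prod_nonneg fun k _ => hπ.1 _
        · exact herr θv
    _ = (Fintype.card Θ - 1) * ∑ θv : Fin K → Θ, (∏ k, π (θv k)) * tv (marg K θv) π := by
        rw [mul_sum]
        exact sum_congr rfl fun θv _ => by ring
    _ ≤ (Fintype.card Θ - 1) * (√(Fintype.card Θ - 1) / (2 * √K)) := by
        gcongr
        exact sum_prod_mul_tv_marg_le hπ hK₀
    _ = (1 / (2 * √K)) * ((Fintype.card Θ : ℝ) - 1) ^ ((3 : ℝ) / 2) := by
        rw [show (3 : ℝ) / 2 = 1 + 1 / 2 by norm_num, Real.rpow_add' hn (by norm_num),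
          Real.rpow_one, ← Real.sqrt_eq_rpow]
        ring

/-- Expected error bound. If `x` is cyclically monotone,
there is a best-response strategy `σ` for the quota mechanism with quota `π`
whose expected average decision error under i.i.d. draws from `π` is at most
`(1/(2√K))·(|Θ| − 1)^{3/2}`. -/
theorem quota_expected_error_bound {Θ X : Type*} [Fintype Θ] [Fintype X]
    [Nonempty Θ] [Nonempty X] [DecidableEq Θ]
    (u : X × Θ → ℝ) (x : Θ → X → ℝ) (hx : ∀ θ, IsProbVec (x θ))
    (hcm : CyclMonoSCF u x)
    (π : Θ → ℝ) (hπ : IsProbVec π) (K : ℕ) (hK : 1 ≤ K) :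
    ∃ σ : (Fin K → Θ) → (Fin K → Θ → ℝ),
      (∀ θv : Fin K → Θ, Feasible K π (σ θv) ∧
        ∀ r' : Fin K → Θ → ℝ, Feasible K π r' →
          payoff u x K θv r' ≤ payoff u x K θv (σ θv)) ∧
      ∑ θv : Fin K → Θ, (∏ k, π (θv k)) *
          ((∑ k, tv (liftSCF x (σ θv k)) (x (θv k))) / K) ≤
        (1 / (2 * Real.sqrt K)) * ((Fintype.card Θ : ℝ) - 1) ^ ((3 : ℝ) / 2) :=
  quota_expected_error_bound_general u x hx hcm π hπ K hK
end

section
/- Fix an integer m ≥ 2 and an integer K ≥ m. Let Θ = {1,…,m}, X = {1,…,m}, and define u : X × Θ → ℝ by u(p,ℓ) = −(m−1) if p < ℓ, 0 if p = ℓ, and 1 if p > ℓ. Let x : Θ → Δ(X) be the deterministic social choice function x(ℓ) = δ_ℓ, and let q ∈ Δ(Θ) assign probability 1/K to each of 1,…,m−1 and probability (K−m+1)/K to m. Then: (a) x is cyclically monotone; and (b) for every ε > 0 there is NO map f : Θ^K → Δ(X)^K that is incentive compatible — meaning (1/K)·Σ_k ū(f(θ)^k, θ^k) ≥ (1/K)·Σ_k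 ū(f(θ')^k, θ^k) for all θ, θ' ∈ Θ^K — and satisfies (1/K)·Σ_{k=1}^K ‖f(θ)^k − δ_{θ^k}‖ ≤ (m − 1 − ε)·‖q − marg θ‖ for every θ ∈ Θ^K. -/
open Finset

/-- Point mass at `a`. -/
noncomputable def delta {X : Type*} [DecidableEq X] (a : X) : X → ℝ :=
  fun a' => if a' = a then 1 else 0

/-- The utility of the tightness example: `u(p,ℓ) = −(m−1)` if `p < ℓ`, `0` if
`p = ℓ`, and `1` if `p > ℓ`. -/
noncomputable def uEx (m : ℕ) : Fin m × Fin m → ℝ :=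
  fun aθ => if aθ.1 < aθ.2 then -((m : ℝ) - 1) else if aθ.1 = aθ.2 then 0 else 1

/-- The quota of the tightness example: probability `1/K` on each of the first
`m − 1` types and `(K − m + 1)/K` on the last type. -/
noncomputable def qEx (m K : ℕ) : Fin m → ℝ :=
  fun i => if (i : ℕ) = m - 1 then ((K : ℝ) - m + 1) / K else 1 / K

/-!
(a) Around a cycle of distinct types the largest type is followed by a smaller one, a step worth
`−(m − 1)`, while each of the at most `m − 1` other steps is worth at most `1`.

(b) Let `θ = (0, 1, …, m − 2, m − 1, …, m − 1)`, whose empirical distribution is `q`, and let `τ` be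
`θ` shifted one slot to the right with a `0` in front. The error bound at `θ` forces `f θ = δ ∘ θ`.
Incentive compatibility of `τ` against the report `θ` then gives
`m − 1 = Σ_k u(θ^k, τ^k) ≤ Σ_k ū(f(τ)^k, τ^k) ≤ Σ_k ‖f(τ)^k − δ_{τ^k}‖`, because `u ≤ 1` and
`u(ℓ, ℓ) = 0`. But `marg τ` differs from `q` only by mass `1/K` moved from `m − 1` to `0`, so the
error bound at `τ` caps the last sum at `m − 1 − ε`.
-/

section Lotteries

variable {X : Type*} [Fintype X]

lemma tv_nonneg (p q : X → ℝ) : 0 ≤ tv p q := by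
  unfold tv; positivity

lemma tv_eq_zero_iff {p q : X → ℝ} : tv p q = 0 ↔ p = q := by
  simp [tv, sum_eq_zero_iff_of_nonneg, sub_eq_zero, funext_iff]

lemma eq_of_sum_tv_nonpos {ι : Type*} [Fintype ι] {p q : ι → X → ℝ}
    (h : ∑ k, tv (p k) (q k) ≤ 0) : p = q := by
  have h0 := (sum_eq_zero_iff_of_nonneg fun k _ => tv_nonneg (p k) (q k)).mp
    (le_antisymm h (sum_nonneg fun k _ => tv_nonneg _ _))
  exact funext fun k => tv_eq_zero_iff.mp (h0 k (mem_univ k))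

variable [DecidableEq X]

lemma isProbVec_delta (a : X) : IsProbVec (delta a) :=
  ⟨fun z => by unfold delta; split_ifs <;> norm_num, by simp [delta]⟩

lemma ubar_delta {Θ : Type*} (u : X × Θ → ℝ) (a : X) (θ : Θ) :
    ubar u (delta a) θ = u (a, θ) := by
  simp [ubar, delta, ite_mul]

lemma tv_delta {μ : X → ℝ} (hμ : IsProbVec μ) (a : X) : tv μ (delta a) = 1 - μ a := by
  have hle : μ a ≤ 1 := hμ.2 ▸ single_le_sum (fun z _ => hμ.1 z) (mem_univ a)
  have habs : ∀ z, |μ z - delta a z| = μ z + delta a z - 2 * if z = a then μ z else 0 := by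
    intro z
    by_cases hz : z = a
    · subst hz; simp [delta, abs_of_nonpos (sub_nonpos.mpr hle)]; ring
    · simp [delta, hz, abs_of_nonneg (hμ.1 z)]
  simp only [tv, habs, sum_sub_distrib, sum_add_distrib, ← mul_sum, sum_ite_eq', mem_univ,
    if_true, hμ.2, (isProbVec_delta a).2]
  ring

lemma ubar_le_tv_delta {u : X × X → ℝ} {μ : X → ℝ} (hμ : IsProbVec μ) {θ : X}
    (hle : ∀ a, u (a, θ) ≤ 1) (hself : u (θ, θ) = 0) : ubar u μ θ ≤ tv μ (delta θ) := by
  have hpt : ∀ a, u (a, θ) ≤ 1 - delta θ a := by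
    intro a
    by_cases ha : a = θ
    · subst ha; simp [delta, hself]
    · simpa [delta, ha] using hle a
  calc ubar u μ θ ≤ ∑ a, μ a * (1 - delta θ a) :=
        sum_le_sum fun a _ => mul_le_mul_of_nonneg_left (hpt a) (hμ.1 a)
    _ = tv μ (delta θ) := by
        simp [tv_delta hμ, mul_sub, sum_sub_distrib, hμ.2, delta]

lemma marg_eq_sum_delta (K : ℕ) (θ : Fin K → X) (x : X) :
    marg K θ x = (∑ k, delta (θ k) x) / K := by
  rw [marg, card_filter]
  push_cast
  simp only [delta, eq_comm]

lemma tv_marg_snoc_cons {n : ℕ} (v : Fin n → X) {a b : X} (hab : a ≠ b) :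
    tv (marg (n + 1) (Fin.snoc v b : Fin (n + 1) → X)) (marg (n + 1) (Fin.cons a v))
      = 1 / ((n + 1 : ℕ) : ℝ) := by
  have hdiff : ∀ x, marg (n + 1) (Fin.snoc v b : Fin (n + 1) → X) x
      - marg (n + 1) (Fin.cons a v) x = (delta b x - delta a x) / ((n + 1 : ℕ) : ℝ) := by
    intro x
    rw [marg_eq_sum_delta, marg_eq_sum_delta, Fin.sum_univ_castSucc, Fin.sum_univ_succ]
    simp only [Fin.snoc_castSucc, Fin.snoc_last, Fin.cons_zero, Fin.cons_succ]
    ring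
  have hδ : tv (delta b) (delta a) = 1 := by
    simp [tv_delta (isProbVec_delta b), delta, hab]
  simp only [tv, hdiff, abs_div, ← sum_div] at hδ ⊢
  rw [abs_of_pos (by positivity : (0:ℝ) < ((n + 1 : ℕ) : ℝ)), div_right_comm, hδ]

end Lotteries

lemma sum_le_sum_tv_of_truthful {X : Type*} [Fintype X] [DecidableEq X] {K : ℕ}
    {u : X × X → ℝ} (hle : ∀ a θ, u (a, θ) ≤ 1) (hself : ∀ θ, u (θ, θ) = 0)
    {f : (Fin K → X) → Fin K → X → ℝ} (hprob : ∀ θv k, IsProbVec (f θv k))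
    (hIC : ∀ θv θv', ∑ k, ubar u (f θv' k) (θv k) ≤ ∑ k, ubar u (f θv k) (θv k))
    {θ : Fin K → X} (htruth : f θ = fun k => delta (θ k)) (τ : Fin K → X) :
    ∑ k, u (θ k, τ k) ≤ ∑ k, tv (f τ k) (delta (τ k)) :=
  calc ∑ k, u (θ k, τ k) = ∑ k, ubar u (f θ k) (τ k) := by simp [htruth, ubar_delta]
    _ ≤ ∑ k, ubar u (f τ k) (τ k) := hIC τ θ
    _ ≤ ∑ k, tv (f τ k) (delta (τ k)) :=
        sum_le_sum fun k _ => ubar_le_tv_delta (hprob τ k) (hle · _) (hself _)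

section UtilityExample

variable {m : ℕ}

lemma uEx_self (a : Fin m) : uEx m (a, a) = 0 := by
  simp [uEx]

lemma uEx_le_one (a θ : Fin m) : uEx m (a, θ) ≤ 1 := by
  unfold uEx
  split_ifs <;> linarith [(Nat.cast_nonneg m : (0:ℝ) ≤ m)]

lemma uEx_of_lt {a θ : Fin m} (h : a < θ) : uEx m (a, θ) = -((m : ℝ) - 1) := by
  simp [uEx, h]

lemma uEx_of_gt {a θ : Fin m} (h : θ < a) : uEx m (a, θ) = 1 := by
  simp [uEx, h.not_gt, h.ne']

lemma exists_cyclic_descent {α : Type*} [LinearOrder α] {J : ℕ} {θs : Fin (J + 2) → α}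
    (hinj : Function.Injective θs) : ∃ j, θs (j + 1) < θs j := by
  obtain ⟨j, -, hmax⟩ := exists_max_image univ θs univ_nonempty
  exact ⟨j, (hmax _ (mem_univ _)).lt_of_ne fun h => one_ne_zero (add_eq_left.mp (hinj h))⟩

theorem cyclMonoSCF_uEx_delta : CyclMonoSCF (uEx m) (fun ℓ : Fin m => delta ℓ) := by
  intro J θs hinj
  obtain ⟨j₀, hdesc⟩ := exists_cyclic_descent hinj
  have hcard : J + 2 ≤ m := by simpa using Fintype.card_le_of_injective θs hinj
  have hrest : ∑ j ∈ univ.erase j₀, uEx m (θs (j + 1), θs j) ≤ J + 1 :=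
    calc _ ≤ ∑ j ∈ univ.erase j₀, (1 : ℝ) := sum_le_sum fun j _ => uEx_le_one _ _
      _ = J + 1 := by simp
  simp only [ubar_delta, uEx_self, sum_const_zero]
  rw [← add_sum_erase _ _ (mem_univ j₀), uEx_of_lt hdesc]
  have : (J : ℝ) + 2 ≤ m := by exact_mod_cast hcard
  linarith

end UtilityExample

def quotaProfile (m K : ℕ) (hm : 0 < m) : Fin K → Fin m :=
  fun k => ⟨min k (m - 1), by omega⟩

lemma marg_quotaProfile {m K : ℕ} (hm : 0 < m) (hK : m ≤ K) :
    marg K (quotaProfile m K hm) = qEx m K := by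
  funext i
  have hcount : #{k | quotaProfile m K hm k = i}
      = if (i : ℕ) = m - 1 then K - (m - 1) else 1 := by
    split_ifs with hi
    · have : ({k | quotaProfile m K hm k = i} : Finset (Fin K)) = Ici ⟨m - 1, by omega⟩ := by
        ext k; simp [quotaProfile, Fin.ext_iff, Fin.le_def]; omega
      rw [this, Fin.card_Ici]
    · refine card_eq_one.mpr ⟨⟨i, by omega⟩, ?_⟩
      ext k; simp [quotaProfile, Fin.ext_iff]; omega
  simp only [marg, qEx, hcount]
  split_ifs
  · rw [Nat.cast_sub (by omega), Nat.cast_sub (by omega)]; push_cast; ring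
  · simp

lemma sum_uEx_quotaProfile_cons_init {m n : ℕ} (hm : 0 < m) (hn : m - 1 ≤ n) :
    ∑ k, uEx m (quotaProfile m (n + 1) hm k,
      (Fin.cons (⟨0, hm⟩ : Fin m) (Fin.init (quotaProfile m (n + 1) hm)) : Fin (n + 1) → Fin m) k)
      = (m : ℝ) - 1 := by
  have hstep : ∀ j : Fin n, uEx m (quotaProfile m (n + 1) hm j.succ,
      quotaProfile m (n + 1) hm j.castSucc) = if (j : ℕ) < m - 1 then 1 else 0 := by
    intro j
    split_ifs with h
    · exact uEx_of_gt (by simp [Fin.lt_def, quotaProfile]; omega)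
    · rw [show quotaProfile m (n + 1) hm j.succ = quotaProfile m (n + 1) hm j.castSucc by
        ext; simp [quotaProfile]; omega]
      exact uEx_self _
  have hfirst : quotaProfile m (n + 1) hm 0 = ⟨0, hm⟩ := by ext; simp [quotaProfile]
  rw [Fin.sum_univ_succ]
  simp only [Fin.cons_zero, Fin.cons_succ, Fin.init, hfirst, uEx_self, hstep, sum_boole,
    Fin.card_filter_val_lt, zero_add]
  rw [min_eq_right hn, Nat.cast_sub (by omega), Nat.cast_one]

/-- Tightness of the constant `|Θ| − 1`. In the example
with `Θ = X = Fin m`, utility `uEx m`, the deterministic social choice function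
`ℓ ↦ δ_ℓ`, and quota `qEx m K`: (a) the social choice function is cyclically
monotone, and (b) for every `ε > 0` no incentive-compatible mechanism
`f : Θ^K → Δ(X)^K` achieves an ex-post decision error bound with constant
`m − 1 − ε`. -/
theorem quota_constant_tight (m K : ℕ) (hm : 2 ≤ m) (hK : m ≤ K) :
    CyclMonoSCF (uEx m) (fun ℓ : Fin m => delta ℓ) ∧
      ∀ ε : ℝ, 0 < ε →
        ¬∃ f : (Fin K → Fin m) → (Fin K → Fin m → ℝ),
          (∀ θv k, IsProbVec (f θv k)) ∧
          (∀ θv θv' : Fin K → Fin m,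
            (∑ k, ubar (uEx m) (f θv' k) (θv k)) / K ≤
              (∑ k, ubar (uEx m) (f θv k) (θv k)) / K) ∧
          (∀ θv : Fin K → Fin m,
            (∑ k, tv (f θv k) (delta (θv k))) / K ≤
              ((m : ℝ) - 1 - ε) * tv (qEx m K) (marg K θv)) := by
  refine ⟨cyclMonoSCF_uEx_delta, ?_⟩
  rintro ε hε ⟨f, hprob, hIC, herr⟩
  obtain ⟨n, rfl⟩ : ∃ n, K = n + 1 := ⟨K - 1, by omega⟩
  have hpos : (0 : ℝ) < ((n + 1 : ℕ) : ℝ) := by positivity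
  set θ := quotaProfile m (n + 1) (by omega)
  set τ : Fin (n + 1) → Fin m := Fin.cons ⟨0, by omega⟩ (Fin.init θ)
  have hq : marg (n + 1) θ = qEx m (n + 1) := marg_quotaProfile _ hK
  have htruth : f θ = fun k => delta (θ k) := by
    have h := herr θ
    rw [← hq, tv_eq_zero_iff.mpr rfl, mul_zero, div_le_iff₀ hpos, zero_mul] at h
    exact eq_of_sum_tv_nonpos h
  have hdev : (m : ℝ) - 1 ≤ ∑ k, tv (f τ k) (delta (τ k)) := by
    rw [← sum_uEx_quotaProfile_cons_init (n := n) _ (by omega)]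
    exact sum_le_sum_tv_of_truthful uEx_le_one uEx_self hprob
      (fun θv θv' => (div_le_div_iff_of_pos_right hpos).mp (hIC θv θv')) htruth τ
  have hdist : tv (qEx m (n + 1)) (marg (n + 1) τ) = 1 / ((n + 1 : ℕ) : ℝ) := by
    have hlast : θ (Fin.last n) ≠ ⟨0, by omega⟩ := by
      simp [θ, quotaProfile, Fin.ext_iff]; omega
    simpa [Fin.snoc_init_self, hq] using tv_marg_snoc_cons (Fin.init θ) hlast.symm
  have hbound := herr τ
  rw [hdist, mul_one_div, div_le_div_iff_of_pos_right hpos] at hbound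
  linarith
end
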